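/- arXiv:1509.04912 — 2 statements merged into one kernel-verified Lean document; each statement's English description precedes it below -/
import Mathlib

section
/- Let X be an infinite-dimensional complex Banach space, T a bounded linear operator on X, and Γ ⊆ ℂ a nonempty set that is bounded and bounded away from 0 (there exist 0 < a ≤ b with a ≤ |γ| ≤ b for all γ ∈ Γ). If x is Γ-supercyclic for T, then p(T)x is Γ-supercyclic for T for every nonzero polynomial p ∈ ℂ[X]. -/
/-!
If `T - μ` failed to have dense range, Hahn–Banach would give a nonzero functional `φ` with
`φ ∘ T = μ φ`, so `φ` would map the dense set `Orb(Γx, T)` onto `{γ μⁿ φ(x)}`, which would then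
be dense in `ℂ`; but that set is bounded when `|μ| ≤ 1` and stays away from `0` when `|μ| > 1`.
Splitting `p` into linear factors, `p(T)` is a product of operators with dense range, and since
it commutes with `T` it maps `Orb(Γx, T)` into `Orb(Γ p(T)x, T)` with dense image.
-/

open Set Polynomial

def gammaOrbit {𝕜 X : Type*} [Semiring 𝕜] [TopologicalSpace X] [AddCommMonoid X] [Module 𝕜 X]
    (T : X →L[𝕜] X) (Γ : Set 𝕜) (x : X) : Set X :=
  {y | ∃ γ ∈ Γ, ∃ n : ℕ, y = γ • (T ^ n) x}

theorem Dense.gammaOrbit_of_semiconj {𝕜 X Y : Type*} [Semiring 𝕜] [TopologicalSpace X]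
    [AddCommMonoid X] [Module 𝕜 X] [TopologicalSpace Y] [AddCommMonoid Y] [Module 𝕜 Y]
    {T : X →L[𝕜] X} {S : Y →L[𝕜] Y} {Γ : Set 𝕜} {x : X} (hx : Dense (gammaOrbit T Γ x))
    {φ : X →L[𝕜] Y} (hφ : DenseRange φ) (hφT : Function.Semiconj φ T S) :
    Dense (gammaOrbit S Γ (φ x)) := by
  refine (hφ.dense_image φ.continuous hx).mono ?_
  rintro _ ⟨_, ⟨γ, hγ, n, rfl⟩, rfl⟩
  refine ⟨γ, hγ, n, ?_⟩
  rw [map_smul, FunLike.coe_pow_eq_iterate, FunLike.coe_pow_eq_iterate, (hφT.iterate_right n).eq]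

theorem Submodule.exists_dual_ne_zero_of_not_dense {𝕜 E : Type*} [RCLike 𝕜]
    [SeminormedAddCommGroup E] [NormedSpace 𝕜 E] (S : Submodule 𝕜 E) (hS : ¬Dense (S : Set E)) :
    ∃ φ : StrongDual 𝕜 E, φ ≠ 0 ∧ ∀ y ∈ S, φ y = 0 := by
  obtain ⟨z, hz⟩ : ∃ z, z ∉ closure (S : Set E) := by simpa [Dense] using hS
  have hnorm : ‖S.mkQ z‖ ≠ 0 := mt QuotientAddGroup.norm_mk_eq_zero_iff_mem_closure.1 hz
  obtain ⟨g, -, hg⟩ := exists_dual_vector 𝕜 (S.mkQ z) hnorm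
  refine ⟨g.comp S.mkQL, fun h ↦ hnorm ?_, fun y hy ↦ ?_⟩
  · rw [← RCLike.ofReal_eq_zero (K := 𝕜), ← hg]
    exact DFunLike.congr_fun h z
  · simp [(Submodule.Quotient.mk_eq_zero S).2 hy]

section Scalar

variable {𝕜 : Type*} [NontriviallyNormedField 𝕜] {Γ : Set 𝕜} {a b : ℝ}

theorem exists_norm_eq_of_mem_gammaOrbit_algebraMap (μ c : 𝕜) {z : 𝕜}
    (hz : z ∈ gammaOrbit (algebraMap 𝕜 (𝕜 →L[𝕜] 𝕜) μ) Γ c) :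
    ∃ γ ∈ Γ, ∃ n : ℕ, ‖z‖ = ‖γ‖ * ‖μ‖ ^ n * ‖c‖ := by
  obtain ⟨γ, hγ, n, rfl⟩ := hz
  exact ⟨γ, hγ, n, by simp [← map_pow, mul_assoc]⟩

theorem not_dense_gammaOrbit_algebraMap (ha : 0 < a) (hΓ : ∀ γ ∈ Γ, a ≤ ‖γ‖ ∧ ‖γ‖ ≤ b)
    (μ c : 𝕜) : ¬Dense (gammaOrbit (algebraMap 𝕜 (𝕜 →L[𝕜] 𝕜) μ) Γ c) := by
  intro hd
  by_cases hsmall : ‖μ‖ ≤ 1 ∨ c = 0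
  · have hbdd : Bornology.IsBounded (gammaOrbit (algebraMap 𝕜 (𝕜 →L[𝕜] 𝕜) μ) Γ c) := by
      refine (Metric.isBounded_closedBall (x := 0) (r := b * ‖c‖)).subset fun z hz ↦ ?_
      obtain ⟨γ, hγ, n, hz⟩ := exists_norm_eq_of_mem_gammaOrbit_algebraMap μ c hz
      rw [mem_closedBall_zero_iff, hz]
      rcases hsmall with hμ | rfl
      · have hγb := (hΓ γ hγ).2
        gcongr
        calc ‖γ‖ * ‖μ‖ ^ n ≤ b * 1 :=
              mul_le_mul hγb (pow_le_one₀ (norm_nonneg μ) hμ) (by positivity)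
                ((norm_nonneg γ).trans hγb)
          _ = b := mul_one b
      · simp
    exact NormedSpace.unbounded_univ 𝕜 𝕜 (hd.closure_eq ▸ hbdd.closure)
  · obtain ⟨hμ, hc⟩ := not_or.1 hsmall
    rw [not_le] at hμ
    obtain ⟨z, hz, hzball⟩ := hd.exists_mem_open Metric.isOpen_ball
      ⟨0, Metric.mem_ball_self (by positivity : 0 < a * ‖c‖)⟩
    obtain ⟨γ, hγ, n, hnorm⟩ := exists_norm_eq_of_mem_gammaOrbit_algebraMap μ c hz
    rw [mem_ball_zero_iff, hnorm] at hzball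
    have : a * 1 ≤ ‖γ‖ * ‖μ‖ ^ n := by
      gcongr
      · exact (hΓ γ hγ).1
      · exact one_le_pow₀ hμ.le
    nlinarith [norm_pos_iff.2 hc]

end Scalar

theorem denseRange_sub_algebraMap_of_dense_gammaOrbit {𝕜 X : Type*} [RCLike 𝕜]
    [SeminormedAddCommGroup X] [NormedSpace 𝕜 X] {T : X →L[𝕜] X} {Γ : Set 𝕜} {a b : ℝ}
    (ha : 0 < a) (hΓ : ∀ γ ∈ Γ, a ≤ ‖γ‖ ∧ ‖γ‖ ≤ b) {x : X} (hx : Dense (gammaOrbit T Γ x))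
    (μ : 𝕜) : DenseRange (T - algebraMap 𝕜 (X →L[𝕜] X) μ) := by
  by_contra hd
  obtain ⟨φ, hφ, hφker⟩ := Submodule.exists_dual_ne_zero_of_not_dense
    (LinearMap.range (T - algebraMap 𝕜 (X →L[𝕜] X) μ).toLinearMap)
    (by rwa [LinearMap.coe_range])
  have hφT : Function.Semiconj φ T (algebraMap 𝕜 (𝕜 →L[𝕜] 𝕜) μ) := fun v ↦ by
    simpa [sub_eq_zero] using hφker _ (LinearMap.mem_range_self _ v)
  have hφsurj : Function.Surjective φ :=
    LinearMap.surjective (f := φ.toLinearMap) (by exact_mod_cast hφ)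
  exact not_dense_gammaOrbit_algebraMap ha hΓ μ (φ x)
    (hx.gammaOrbit_of_semiconj hφsurj.denseRange hφT)

theorem denseRange_aeval_of_forall_denseRange_sub {𝕜 X : Type*} [Field 𝕜] [IsAlgClosed 𝕜]
    [TopologicalSpace X] [AddCommGroup X] [Module 𝕜 X] [IsTopologicalAddGroup X]
    [ContinuousConstSMul 𝕜 X] {T : X →L[𝕜] X}
    (hT : ∀ μ : 𝕜, DenseRange (T - algebraMap 𝕜 (X →L[𝕜] X) μ)) {p : 𝕜[X]} (hp : p ≠ 0) :
    DenseRange (aeval T p) := by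
  have hmul : ∀ q r : 𝕜[X], DenseRange (aeval T q) → DenseRange (aeval T r) →
      DenseRange (aeval T (q * r)) := fun q r hq hr ↦ by
    rw [map_mul]
    exact hq.comp hr (aeval T q).continuous
  rw [← C_leadingCoeff_mul_prod_multiset_X_sub_C (IsAlgClosed.card_roots_eq_natDegree (p := p))]
  refine hmul _ _ ?_ (Multiset.prod_induction _ _ hmul (by simpa using denseRange_id) ?_)
  · have hlead : p.leadingCoeff ≠ 0 := leadingCoeff_ne_zero.2 hp
    refine Function.Surjective.denseRange fun v ↦ ⟨p.leadingCoeff⁻¹ • v, ?_⟩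
    simp [smul_smul, hlead]
  · simp only [Multiset.mem_map]
    rintro _ ⟨μ, -, rfl⟩
    simpa using hT μ

theorem gamma_supercyclic_polynomial_image_general
    (X : Type*) [NormedAddCommGroup X] [NormedSpace ℂ X]
    (T : X →L[ℂ] X) (Γ : Set ℂ)
    (hΓ : ∃ a b : ℝ, 0 < a ∧ a ≤ b ∧ ∀ γ ∈ Γ, a ≤ ‖γ‖ ∧ ‖γ‖ ≤ b)
    (x : X) (hx : Dense {y : X | ∃ γ ∈ Γ, ∃ n : ℕ, y = γ • (T ^ n) x}) :
    ∀ p : Polynomial ℂ, p ≠ 0 →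
      Dense {y : X | ∃ γ ∈ Γ, ∃ n : ℕ, y = γ • (T ^ n) ((Polynomial.aeval T p) x)} := by
  intro p hp
  obtain ⟨a, b, ha, -, hΓab⟩ := hΓ
  have hdense : DenseRange (aeval T p) := denseRange_aeval_of_forall_denseRange_sub
    (denseRange_sub_algebraMap_of_dense_gammaOrbit ha hΓab hx) hp
  have hcomm : Function.Semiconj (aeval T p) T T := fun v ↦ by
    simpa using DFunLike.congr_fun ((commute_X p).map (aeval T)).eq.symm v
  exact hx.gammaOrbit_of_semiconj hdense hcomm

/-- **Lemma 3.6.** If `x` is `Γ`-supercyclic for `T` with `Γ` nonempty, bounded and bounded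
away from `0`, then `p(T)x` is `Γ`-supercyclic for `T` for every nonzero polynomial `p`. -/
theorem gamma_supercyclic_polynomial_image
    (X : Type*) [NormedAddCommGroup X] [NormedSpace ℂ X] [CompleteSpace X]
    (hX : ¬FiniteDimensional ℂ X) (T : X →L[ℂ] X) (Γ : Set ℂ)
    (hne : Γ.Nonempty)
    (hΓ : ∃ a b : ℝ, 0 < a ∧ a ≤ b ∧ ∀ γ ∈ Γ, a ≤ ‖γ‖ ∧ ‖γ‖ ≤ b)
    (x : X) (hx : Dense {y : X | ∃ γ ∈ Γ, ∃ n : ℕ, y = γ • (T ^ n) x}) :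
    ∀ p : Polynomial ℂ, p ≠ 0 →
      Dense {y : X | ∃ γ ∈ Γ, ∃ n : ℕ, y = γ • (T ^ n) ((Polynomial.aeval T p) x)} :=
  gamma_supercyclic_polynomial_image_general X T Γ hΓ x hx
end

section
/- Let X be an infinite-dimensional complex Banach space, T a bounded linear operator on X, and b > 1. Suppose x ∈ X is [1,b]𝕋-supercyclic for T and the closure of Orb(𝕋x,T) intersected with [1,b]𝕋x equals 𝕋x ∪ b𝕋x. Then for every vector y ∈ X that is [1,b]𝕋-supercyclic for T, there exists λ ∈ [1,b] such that the closure of Orb(𝕋x,T) intersected with {t·y : t ∈ ℝ, t > 0} equals {(b^n/λ)·y : n ∈ ℤ}. -/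
/-!
Let `C` be the closure of `Orb(𝕋x, T)`. It is closed, `T`-invariant and `𝕋`-invariant, and
`μx ∈ C` implies `μC ⊆ C`, so `G = {μ : μx ∈ C}` is a multiplicative monoid; the hypothesis on
`x` says that `G` meets `(1, b)` nowhere while `b ∈ G`.

If `u` is `[1,b]𝕋`-supercyclic, every `v` is a limit of `t_k z_k T^{n_k} u` with `t_k → τ ∈ [1, b]`,
hence `μu ∈ C` implies `(μ/τ)v ∈ C`. For `u = x`, `v = r⁻¹x` with `1 < r < b` this gives
`ρ⁻¹ ∈ G` with `1 < ρ < b²`, and the gap forces `ρ = b`; so `b⁻¹ ∈ G` and `G ∩ (0, ∞) = b^ℤ`.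
Transporting in both directions between `x` and `y` carries `b^ℤ` onto the positive multiples of
`y` lying in `C`, up to one factor `λ ∈ [1, b]`.
-/

open Set Filter

lemma Submonoid.zpow_mem_of_inv_mem {M : Type*} [DivisionMonoid M] {G : Submonoid M} {b : M}
    (hb : b ∈ G) (hbinv : b⁻¹ ∈ G) : ∀ k : ℤ, b ^ k ∈ G
  | Int.ofNat n => by simpa only [Int.ofNat_eq_natCast, zpow_natCast] using G.pow_mem hb n
  | Int.negSucc n => by simpa only [zpow_negSucc, ← inv_pow] using G.pow_mem hbinv (n + 1)

section OrderedField

variable {K : Type*} [Field K] [LinearOrder K] [IsStrictOrderedRing K] {G : Submonoid K} {b : K}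

lemma Submonoid.eq_of_inv_mem_of_forall_notMem_Ioo (hb0 : 0 < b) (hb : b ∈ G)
    (hgap : ∀ μ ∈ G, μ ∉ Ioo 1 b) {ρ : K} (hρ : ρ⁻¹ ∈ G) (h1 : 1 < ρ) (h2 : ρ < b ^ 2) : ρ = b := by
  have hρ0 : 0 < ρ := one_pos.trans h1
  rcases lt_trichotomy ρ b with hlt | heq | hgt
  · refine absurd ⟨?_, ?_⟩ (hgap _ (G.mul_mem hρ hb))
    · rwa [inv_mul_eq_div, one_lt_div hρ0]
    · rw [inv_mul_eq_div, div_lt_iff₀ hρ0]; nlinarith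
  · exact heq
  · refine absurd ⟨?_, ?_⟩ (hgap _ (G.mul_mem (G.mul_mem hρ hb) hb))
    · rwa [mul_assoc, ← sq, inv_mul_eq_div, one_lt_div hρ0]
    · rw [mul_assoc, ← sq, inv_mul_eq_div, div_lt_iff₀ hρ0, sq]; nlinarith

lemma Submonoid.exists_eq_zpow_of_forall_notMem_Ioo [Archimedean K] (hb1 : 1 < b) (hb : b ∈ G)
    (hbinv : b⁻¹ ∈ G) (hgap : ∀ μ ∈ G, μ ∉ Ioo 1 b) {μ : K} (hμ : μ ∈ G) (hμ0 : 0 < μ) :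
    ∃ m : ℤ, μ = b ^ m := by
  obtain ⟨m, hm, hm'⟩ := exists_mem_Ico_zpow hμ0 hb1
  have hbm : 0 < b ^ m := zpow_pos (one_pos.trans hb1) m
  have hν := hgap _ (G.mul_mem hμ (G.zpow_mem_of_inv_mem hb hbinv (-m)))
  rw [zpow_neg, ← div_eq_mul_inv, mem_Ioo, one_lt_div hbm, div_lt_iff₀' hbm,
    ← zpow_add_one₀ (one_pos.trans hb1).ne'] at hν
  exact ⟨m, (hm.antisymm (not_lt.1 fun h => hν ⟨h, hm'⟩)).symm⟩

end OrderedField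

section Orbit

variable {X : Type*} [NormedAddCommGroup X] [NormedSpace ℂ X]

def circleOrbit (T : X →L[ℂ] X) (x : X) : Set X :=
  {w | ∃ z : ℂ, ‖z‖ = 1 ∧ ∃ n : ℕ, w = z • (T ^ n) x}

def annulusOrbit (T : X →L[ℂ] X) (b : ℝ) (x : X) : Set X :=
  {w | ∃ t ∈ Icc (1 : ℝ) b, ∃ z : ℂ, ‖z‖ = 1 ∧ ∃ n : ℕ, w = ((t : ℂ) * z) • (T ^ n) x}

lemma ContinuousLinearMap.mapsTo_pow {T : X →L[ℂ] X} {s : Set X} (hT : MapsTo T s s) (n : ℕ) :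
    MapsTo (T ^ n) s s := by
  simpa using hT.iterate n

lemma ne_zero_of_dense_annulusOrbit [Nontrivial X] {T : X →L[ℂ] X} {b : ℝ} {x : X}
    (hx : Dense (annulusOrbit T b x)) : x ≠ 0 := by
  rintro rfl
  have hsub : annulusOrbit T b 0 ⊆ {0} := by
    rintro _ ⟨t, -, z, -, n, rfl⟩
    simp
  obtain ⟨w, hw⟩ := exists_ne (0 : X)
  simpa [hw] using closure_mono hsub (hx w)

lemma exists_div_smul_mem_of_dense_annulusOrbit {T : X →L[ℂ] X} {b : ℝ} {C : Set X}
    (hC : IsClosed C) (hT : MapsTo T C C) (hrot : ∀ z : ℂ, ‖z‖ = 1 → MapsTo (z • ·) C C)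
    {u : X} (hu : Dense (annulusOrbit T b u)) (v : X) :
    ∃ τ ∈ Icc (1 : ℝ) b, ∀ μ : ℝ, (μ : ℂ) • u ∈ C → ((μ / τ : ℝ) : ℂ) • v ∈ C := by
  obtain ⟨w, hw, hwv⟩ := mem_closure_iff_seq_limit.1 (hu v)
  choose t ht z hz n hn using hw
  obtain ⟨τ, hτ, φ, hφ, htτ⟩ := isCompact_Icc.tendsto_subseq ht
  have ht0 : ∀ k, (t k : ℂ) ≠ 0 := fun k => by
    exact_mod_cast (one_pos.trans_le (ht k).1).ne'
  refine ⟨τ, hτ, fun μ hμ => hC.mem_of_tendsto (b := atTop)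
    (f := fun k => ((μ / t (φ k) : ℝ) : ℂ) • w (φ k)) ?_ (Eventually.of_forall fun k => ?_)⟩
  · have hτ0 : τ ≠ 0 := (one_pos.trans_le hτ.1).ne'
    exact ((Complex.continuous_ofReal.tendsto _).comp (tendsto_const_nhds.div htτ hτ0)).smul
      (hwv.comp hφ.tendsto_atTop)
  · have hiter : z (φ k) • (T ^ n (φ k)) ((μ : ℂ) • u) =
        ((μ / t (φ k) : ℝ) : ℂ) • w (φ k) := by
      rw [hn, map_smul, smul_smul, smul_smul, Complex.ofReal_div]
      field_simp [ht0 (φ k)]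
    exact hiter ▸ hrot _ (hz _) (ContinuousLinearMap.mapsTo_pow hT _ hμ)

lemma mapsTo_closure_circleOrbit (T : X →L[ℂ] X) (x : X) :
    MapsTo T (closure (circleOrbit T x)) (closure (circleOrbit T x)) := by
  refine MapsTo.closure ?_ T.continuous
  rintro _ ⟨z, hz, n, rfl⟩
  exact ⟨z, hz, n + 1, by rw [map_smul, pow_succ']; rfl⟩

lemma smul_mapsTo_closure_circleOrbit {T : X →L[ℂ] X} {x : X} {z : ℂ} (hz : ‖z‖ = 1) :
    MapsTo (z • ·) (closure (circleOrbit T x)) (closure (circleOrbit T x)) := by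
  refine MapsTo.closure ?_ (continuous_const_smul z)
  rintro _ ⟨z', hz', n, rfl⟩
  exact ⟨z * z', by rw [norm_mul, hz, hz', one_mul], n, smul_smul _ _ _⟩

lemma smul_mapsTo_closure_circleOrbit_of_smul_mem {T : X →L[ℂ] X} {x : X} {μ : ℂ}
    (hμ : μ • x ∈ closure (circleOrbit T x)) :
    MapsTo (μ • ·) (closure (circleOrbit T x)) (closure (circleOrbit T x)) := by
  have horbit : MapsTo (μ • ·) (circleOrbit T x) (closure (circleOrbit T x)) := by
    rintro _ ⟨z, hz, n, rfl⟩
    change μ • z • (T ^ n) x ∈ _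
    rw [smul_comm, ← map_smul]
    exact smul_mapsTo_closure_circleOrbit hz
      (ContinuousLinearMap.mapsTo_pow (mapsTo_closure_circleOrbit T x) n hμ)
  simpa using horbit.closure (continuous_const_smul μ)

def orbitScalars (T : X →L[ℂ] X) (x : X) : Submonoid ℝ where
  carrier := {μ | (μ : ℂ) • x ∈ closure (circleOrbit T x)}
  one_mem' := subset_closure ⟨1, norm_one, 0, by simp⟩
  mul_mem' {μ ν} hμ hν := by
    simpa [smul_smul] using smul_mapsTo_closure_circleOrbit_of_smul_mem hμ hν

@[simp]
lemma mem_orbitScalars {T : X →L[ℂ] X} {x : X} {μ : ℝ} :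
    μ ∈ orbitScalars T x ↔ (μ : ℂ) • x ∈ closure (circleOrbit T x) :=
  Iff.rfl

lemma exists_div_smul_mem_closure_circleOrbit {T : X →L[ℂ] X} {b : ℝ} {u : X}
    (hu : Dense (annulusOrbit T b u)) (x v : X) :
    ∃ τ ∈ Icc (1 : ℝ) b, ∀ μ : ℝ, (μ : ℂ) • u ∈ closure (circleOrbit T x) →
      ((μ / τ : ℝ) : ℂ) • v ∈ closure (circleOrbit T x) :=
  exists_div_smul_mem_of_dense_annulusOrbit isClosed_closure (mapsTo_closure_circleOrbit T x)
    (fun _ => smul_mapsTo_closure_circleOrbit) hu v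

lemma forall_notMem_Ioo_orbitScalars {T : X →L[ℂ] X} {b : ℝ} (hb : 0 < b) {x : X}
    (hx0 : x ≠ 0)
    (hexc : closure (circleOrbit T x) ∩
        {y | ∃ t ∈ Icc (1 : ℝ) b, ∃ z : ℂ, ‖z‖ = 1 ∧ y = ((t : ℂ) * z) • x} ⊆
      {y | ∃ z : ℂ, ‖z‖ = 1 ∧ y = z • x} ∪ {y | ∃ z : ℂ, ‖z‖ = 1 ∧ y = ((b : ℂ) * z) • x}) :
    ∀ μ ∈ orbitScalars T x, μ ∉ Ioo 1 b := by
  rintro μ hμ ⟨h1, h2⟩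
  have hμ0 : 0 < μ := one_pos.trans h1
  rcases hexc ⟨hμ, μ, ⟨h1.le, h2.le⟩, 1, norm_one, by rw [mul_one]⟩ with ⟨z, hz, h⟩ | ⟨z, hz, h⟩
  all_goals
    have hnorm := congrArg norm (smul_left_injective ℂ hx0 h)
    simp only [Complex.norm_real, norm_mul, hz, Real.norm_of_nonneg hμ0.le,
      Real.norm_of_nonneg hb.le, mul_one] at hnorm
    linarith

lemma inv_mem_orbitScalars {T : X →L[ℂ] X} {b : ℝ} (hb : 1 < b) {x : X}
    (hx : Dense (annulusOrbit T b x)) (hbG : b ∈ orbitScalars T x)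
    (hgap : ∀ μ ∈ orbitScalars T x, μ ∉ Ioo 1 b) : b⁻¹ ∈ orbitScalars T x := by
  obtain ⟨r, hr1, hrb⟩ := exists_between hb
  obtain ⟨τ, hτ, hτx⟩ := exists_div_smul_mem_closure_circleOrbit hx x (((r⁻¹ : ℝ) : ℂ) • x)
  have hρ : (τ * r)⁻¹ ∈ orbitScalars T x := by
    have := hτx 1 ((orbitScalars T x).one_mem)
    rw [smul_smul, ← Complex.ofReal_mul] at this
    rwa [mem_orbitScalars, mul_inv, ← one_div]
  have hρb := (orbitScalars T x).eq_of_inv_mem_of_forall_notMem_Ioo (by linarith) hbG hgap hρ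
    (by nlinarith [hτ.1]) (by nlinarith [hτ.2])
  rwa [← hρb]

end Orbit

lemma inter_ray_eq_zpow_div {X : Type*} [AddCommGroup X] [Module ℂ X] {C : Set X} {x y : X}
    {b l s : ℝ} (hb : 0 < b) (hl : 0 < l) (hs : 0 < s)
    (hG : ∀ μ : ℝ, 0 < μ → ((μ : ℂ) • x ∈ C ↔ ∃ m : ℤ, μ = b ^ m))
    (hxy : ∀ μ : ℝ, (μ : ℂ) • x ∈ C → ((μ / l : ℝ) : ℂ) • y ∈ C)
    (hyx : ∀ μ : ℝ, (μ : ℂ) • y ∈ C → ((μ / s : ℝ) : ℂ) • x ∈ C) :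
    C ∩ {w | ∃ t : ℝ, 0 < t ∧ w = ((t : ℝ) : ℂ) • y} =
      {w | ∃ n : ℤ, w = ((b ^ n / l : ℝ) : ℂ) • y} := by
  ext w
  constructor
  · rintro ⟨hwC, t, ht, rfl⟩
    obtain ⟨m, hm⟩ := (hG _ (div_pos ht hs)).1 (hyx t hwC)
    have hxC : ((1 : ℝ) : ℂ) • x ∈ C := (hG 1 one_pos).2 ⟨0, (zpow_zero b).symm⟩
    obtain ⟨m₀, hm₀⟩ := (hG _ (by positivity)).1 (hyx _ (hxy 1 hxC))
    refine ⟨m - m₀, ?_⟩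
    rw [zpow_sub₀ hb.ne', ← hm, ← hm₀]
    field_simp
  · rintro ⟨n, rfl⟩
    exact ⟨hxy _ ((hG _ (zpow_pos hb n)).2 ⟨n, rfl⟩), _, by positivity, rfl⟩

theorem annulus_supercyclic_parameter_general
    (X : Type*) [NormedAddCommGroup X] [NormedSpace ℂ X]
    (hX : ¬FiniteDimensional ℂ X) (T : X →L[ℂ] X) (b : ℝ) (hb : 1 < b)
    (x : X)
    (hx : Dense {y : X | ∃ t ∈ Set.Icc (1 : ℝ) b, ∃ z : ℂ, ‖z‖ = 1 ∧
      ∃ n : ℕ, y = ((t : ℂ) * z) • (T ^ n) x})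
    (hexc : closure {y : X | ∃ z : ℂ, ‖z‖ = 1 ∧ ∃ n : ℕ, y = z • (T ^ n) x} ∩
        {y : X | ∃ t ∈ Set.Icc (1 : ℝ) b, ∃ z : ℂ, ‖z‖ = 1 ∧ y = ((t : ℂ) * z) • x} =
      {y : X | ∃ z : ℂ, ‖z‖ = 1 ∧ y = z • x} ∪
        {y : X | ∃ z : ℂ, ‖z‖ = 1 ∧ y = ((b : ℂ) * z) • x}) :
    ∀ y : X,
      Dense {w : X | ∃ t ∈ Set.Icc (1 : ℝ) b, ∃ z : ℂ, ‖z‖ = 1 ∧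
        ∃ n : ℕ, w = ((t : ℂ) * z) • (T ^ n) y} →
      ∃ l ∈ Set.Icc (1 : ℝ) b,
        closure {w : X | ∃ z : ℂ, ‖z‖ = 1 ∧ ∃ n : ℕ, w = z • (T ^ n) x} ∩
            {w : X | ∃ t : ℝ, 0 < t ∧ w = ((t : ℝ) : ℂ) • y} =
          {w : X | ∃ n : ℤ, w = ((b ^ n / l : ℝ) : ℂ) • y} := by
  intro y hy
  have : Nontrivial X := not_subsingleton_iff_nontrivial.1 fun _ => hX inferInstance
  have hb0 : 0 < b := one_pos.trans hb
  have hbG : b ∈ orbitScalars T x := (hexc.superset (Or.inr ⟨1, norm_one, by rw [mul_one]⟩)).1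
  have hgap := forall_notMem_Ioo_orbitScalars hb0 (ne_zero_of_dense_annulusOrbit hx) hexc.subset
  have hbinv := inv_mem_orbitScalars hb hx hbG hgap
  obtain ⟨l, hl, hxy⟩ := exists_div_smul_mem_closure_circleOrbit hx x y
  obtain ⟨s, hs, hyx⟩ := exists_div_smul_mem_closure_circleOrbit hy x x
  refine ⟨l, hl, inter_ray_eq_zpow_div hb0 (one_pos.trans_le hl.1) (one_pos.trans_le hs.1)
    (fun μ hμ => ⟨fun hμG => ?_, ?_⟩) hxy hyx⟩
  · exact (orbitScalars T x).exists_eq_zpow_of_forall_notMem_Ioo hb hbG hbinv hgap hμG hμ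
  · rintro ⟨m, rfl⟩
    exact (orbitScalars T x).zpow_mem_of_inv_mem hbG hbinv m

/-- **Proposition 3.11.** If `x` is `[1,b]𝕋`-supercyclic for `T` with
`closure(Orb(𝕋x,T)) ∩ [1,b]𝕋x = 𝕋x ∪ b𝕋x`, then for every `[1,b]𝕋`-supercyclic vector `y`
there exists `λ ∈ [1,b]` such that
`closure(Orb(𝕋x,T)) ∩ ℝ₊y = {(b^n/λ)·y : n ∈ ℤ}`. -/
theorem annulus_supercyclic_parameter
    (X : Type*) [NormedAddCommGroup X] [NormedSpace ℂ X] [CompleteSpace X]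
    (hX : ¬FiniteDimensional ℂ X) (T : X →L[ℂ] X) (b : ℝ) (hb : 1 < b)
    (x : X)
    (hx : Dense {y : X | ∃ t ∈ Set.Icc (1 : ℝ) b, ∃ z : ℂ, ‖z‖ = 1 ∧
      ∃ n : ℕ, y = ((t : ℂ) * z) • (T ^ n) x})
    (hexc : closure {y : X | ∃ z : ℂ, ‖z‖ = 1 ∧ ∃ n : ℕ, y = z • (T ^ n) x} ∩
        {y : X | ∃ t ∈ Set.Icc (1 : ℝ) b, ∃ z : ℂ, ‖z‖ = 1 ∧ y = ((t : ℂ) * z) • x} =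
      {y : X | ∃ z : ℂ, ‖z‖ = 1 ∧ y = z • x} ∪
        {y : X | ∃ z : ℂ, ‖z‖ = 1 ∧ y = ((b : ℂ) * z) • x}) :
    ∀ y : X,
      Dense {w : X | ∃ t ∈ Set.Icc (1 : ℝ) b, ∃ z : ℂ, ‖z‖ = 1 ∧
        ∃ n : ℕ, w = ((t : ℂ) * z) • (T ^ n) y} →
      ∃ l ∈ Set.Icc (1 : ℝ) b,
        closure {w : X | ∃ z : ℂ, ‖z‖ = 1 ∧ ∃ n : ℕ, w = z • (T ^ n) x} ∩
            {w : X | ∃ t : ℝ, 0 < t ∧ w = ((t : ℝ) : ℂ) • y} =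
          {w : X | ∃ n : ℤ, w = ((b ^ n / l : ℝ) : ℂ) • y} :=
  annulus_supercyclic_parameter_general X hX T b hb x hx hexc
end
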